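/- arXiv:2402.11972 — 3 statements merged into one kernel-verified Lean document; each statement's English description precedes it below -/
import Mathlib

section
/- Let A = {z ∈ ℂ : z ≠ 0 and |z|² + 1/(16|z|²) ≤ 1}. Then ∫_A (1 + 1/(16|z|⁴)) dλ(z) > 1, where λ is the Lebesgue measure on ℂ ≅ ℝ². -/
open MeasureTheory Metric

/-- Let `A = {z ∈ ℂ : z ≠ 0 and |z|² + 1/(16|z|²) ≤ 1}`. Then
`∫_A (1 + 1/(16|z|⁴)) dλ(z) > 1`, where `λ` is the Lebesgue measure on `ℂ ≅ ℝ²`. -/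
theorem area_of_graph_gt_one :
    1 < ∫ z in {z : ℂ | z ≠ 0 ∧ ‖z‖ ^ 2 + 1 / (16 * ‖z‖ ^ 2) ≤ 1},
      (1 + 1 / (16 * ‖z‖ ^ 4)) ∂(volume : Measure ℂ) := by
  set f : ℂ → ℝ := fun z => 1 + 1 / (16 * ‖z‖ ^ 4) with hfdef
  set A : Set ℂ := {z : ℂ | z ≠ 0 ∧ ‖z‖ ^ 2 + 1 / (16 * ‖z‖ ^ 2) ≤ 1}
    with hAdef
  have habs : Measurable fun z : ℂ => ‖z‖ := continuous_norm.measurable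
  have hfm : Measurable f :=
    measurable_const.add (measurable_const.div (measurable_const.mul (habs.pow_const 4)))
  have hAm : MeasurableSet A := by
    apply MeasurableSet.inter
    · exact (measurableSet_singleton (0:ℂ)).compl
    · exact measurableSet_le ((habs.pow_const 2).add
        (measurable_const.div (measurable_const.mul (habs.pow_const 2)))) measurable_const
  set S1 : Set ℂ := closedBall 0 (Real.sqrt (1/3)) \ ball 0 (1/2) with hS1def
  set S2 : Set ℂ := closedBall 0 (Real.sqrt (1/2)) \ closedBall 0 (Real.sqrt (1/3)) with hS2def
  have hS1m : MeasurableSet S1 := measurableSet_closedBall.diff measurableSet_ball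
  have hS2m : MeasurableSet S2 := measurableSet_closedBall.diff measurableSet_closedBall
  -- membership characterizations
  have hS1mem : ∀ z ∈ S1, 1/4 ≤ ‖z‖ ^ 2 ∧ ‖z‖ ^ 2 ≤ 1/3 := by
    intro z hz
    obtain ⟨h1, h2⟩ := hz
    rw [mem_closedBall_zero_iff] at h1
    rw [mem_ball_zero_iff, not_lt] at h2
    constructor
    · nlinarith
    · nlinarith [(Real.le_sqrt (norm_nonneg z) (by norm_num : (0:ℝ) ≤ 1/3)).mp h1]
  have hS2mem : ∀ z ∈ S2, 1/3 < ‖z‖ ^ 2 ∧ ‖z‖ ^ 2 ≤ 1/2 := by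
    intro z hz
    obtain ⟨h1, h2⟩ := hz
    rw [mem_closedBall_zero_iff] at h1
    rw [mem_closedBall_zero_iff, not_le] at h2
    constructor
    · nlinarith [Real.sq_sqrt (by norm_num : (0:ℝ) ≤ 1/3), Real.sqrt_nonneg (1/3 : ℝ)]
    · nlinarith [(Real.le_sqrt (norm_nonneg z) (by norm_num : (0:ℝ) ≤ 1/2)).mp h1]
  -- S1 ∪ S2 ⊆ A
  have hsubA : ∀ z : ℂ, 1/4 ≤ ‖z‖ ^ 2 → ‖z‖ ^ 2 ≤ 1/2 → z ∈ A := by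
    intro z h1 h2
    have hz0 : z ≠ 0 := by
      intro h; rw [h] at h1; simp at h1; nlinarith
    refine ⟨hz0, ?_⟩
    set t := ‖z‖ ^ 2 with ht
    have htpos : 0 < t := by nlinarith
    have : 1 / (16 * t) ≤ 1 - t := by
      rw [div_le_iff₀ (by positivity)]
      nlinarith
    linarith
  have hS1A : S1 ⊆ A := fun z hz => hsubA z (hS1mem z hz).1 (by linarith [(hS1mem z hz).2])
  have hS2A : S2 ⊆ A := fun z hz => hsubA z (by linarith [(hS2mem z hz).1]) (hS2mem z hz).2
  -- A is bounded
  have hAball : A ⊆ closedBall (0:ℂ) 1 := by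
    intro z hz
    obtain ⟨hz0, hle⟩ := hz
    rw [mem_closedBall_zero_iff]
    have h1 : 0 ≤ 1 / (16 * ‖z‖ ^ 2) := by positivity
    nlinarith [norm_nonneg z]
  have hAfin : volume A ≠ ⊤ := by
    refine ne_top_of_le_ne_top ?_ (measure_mono hAball)
    rw [Complex.volume_closedBall]
    exact ENNReal.mul_ne_top (ENNReal.pow_ne_top ENNReal.ofReal_ne_top) ENNReal.coe_ne_top
  -- integrability
  have hIntA : IntegrableOn f A volume := by
    apply Measure.integrableOn_of_bounded hAfin hfm.aestronglyMeasurable (M := 17)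
    filter_upwards [ae_restrict_mem hAm] with z hz
    obtain ⟨hz0, hle⟩ := hz
    set t := ‖z‖ ^ 2 with ht
    have htpos : 0 < t := by
      have : ‖z‖ ≠ 0 := norm_ne_zero_iff.mpr hz0
      positivity
    have h116 : 1/16 ≤ t := by
      have h1 : 1 / (16 * t) ≤ 1 := by nlinarith [sq_nonneg (‖z‖)]
      rw [div_le_one (by positivity)] at h1
      linarith
    have hfz : f z = 1 + 1 / (16 * t^2) := by
      rw [hfdef, ht]; ring_nf
    rw [Real.norm_eq_abs, abs_of_nonneg (by rw [hfz]; positivity), hfz]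
    have : 1 / (16 * t^2) ≤ 16 := by
      rw [div_le_iff₀ (by positivity)]
      nlinarith
    linarith
  have hIntS1 : IntegrableOn f S1 volume := hIntA.mono_set hS1A
  have hIntS2 : IntegrableOn f S2 volume := hIntA.mono_set hS2A
  -- volumes
  have hsub1 : ball (0:ℂ) (1/2) ⊆ closedBall 0 (Real.sqrt (1/3)) := by
    refine ball_subset_closedBall.trans (closedBall_subset_closedBall ?_)
    rw [show (1:ℝ)/2 = Real.sqrt (1/4) from by
      rw [show (1:ℝ)/4 = (1/2)^2 by norm_num, Real.sqrt_sq (by norm_num)]]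
    exact Real.sqrt_le_sqrt (by norm_num)
  have v1 : (volume S1).toReal = 1/12 * Real.pi := by
    rw [hS1def, measure_diff hsub1 measurableSet_ball.nullMeasurableSet
        (by rw [Complex.volume_ball]
            exact ENNReal.mul_ne_top (ENNReal.pow_ne_top ENNReal.ofReal_ne_top)
              ENNReal.coe_ne_top),
      Complex.volume_closedBall, Complex.volume_ball,
      ← ENNReal.ofReal_pow (Real.sqrt_nonneg _), Real.sq_sqrt (by norm_num : (0:ℝ) ≤ 1/3),
      ← ENNReal.ofReal_pow (by norm_num : (0:ℝ) ≤ 1/2),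
      ENNReal.toReal_sub_of_le
        (mul_le_mul_left (ENNReal.ofReal_le_ofReal (by norm_num)) _)
        (ENNReal.mul_ne_top ENNReal.ofReal_ne_top ENNReal.coe_ne_top),
      ENNReal.toReal_mul, ENNReal.toReal_mul, ENNReal.toReal_ofReal (by norm_num),
      ENNReal.toReal_ofReal (by norm_num), ENNReal.coe_toReal, NNReal.coe_real_pi]
    ring
  have v2 : (volume S2).toReal = 1/6 * Real.pi := by
    rw [hS2def, measure_diff (closedBall_subset_closedBall (Real.sqrt_le_sqrt (by norm_num)))
        measurableSet_closedBall.nullMeasurableSet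
        (by rw [Complex.volume_closedBall]
            exact ENNReal.mul_ne_top (ENNReal.pow_ne_top ENNReal.ofReal_ne_top)
              ENNReal.coe_ne_top),
      Complex.volume_closedBall, Complex.volume_closedBall,
      ← ENNReal.ofReal_pow (Real.sqrt_nonneg _), Real.sq_sqrt (by norm_num : (0:ℝ) ≤ 1/2),
      ← ENNReal.ofReal_pow (Real.sqrt_nonneg _), Real.sq_sqrt (by norm_num : (0:ℝ) ≤ 1/3),
      ENNReal.toReal_sub_of_le
        (mul_le_mul_left (ENNReal.ofReal_le_ofReal (by norm_num)) _)
        (ENNReal.mul_ne_top ENNReal.ofReal_ne_top ENNReal.coe_ne_top),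
      ENNReal.toReal_mul, ENNReal.toReal_mul, ENNReal.toReal_ofReal (by norm_num),
      ENNReal.toReal_ofReal (by norm_num), ENNReal.coe_toReal, NNReal.coe_real_pi]
    ring
  have hS1fin : volume S1 ≠ ⊤ := by
    refine ne_top_of_le_ne_top ?_ (measure_mono (Set.diff_subset))
    exact (by rw [Complex.volume_closedBall]; exact ENNReal.mul_ne_top (ENNReal.pow_ne_top ENNReal.ofReal_ne_top) ENNReal.coe_ne_top)
  have hS2fin : volume S2 ≠ ⊤ := by
    refine ne_top_of_le_ne_top ?_ (measure_mono (Set.diff_subset))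
    exact (by rw [Complex.volume_closedBall]; exact ENNReal.mul_ne_top (ENNReal.pow_ne_top ENNReal.ofReal_ne_top) ENNReal.coe_ne_top)
  -- lower bounds on f
  have hb1 : ∀ z ∈ S1, (25/16 : ℝ) ≤ f z := by
    intro z hz
    obtain ⟨h1, h2⟩ := hS1mem z hz
    set t := ‖z‖ ^ 2 with ht
    have hfz : f z = 1 + 1 / (16 * t^2) := by rw [hfdef, ht]; ring_nf
    rw [hfz]
    have : (9:ℝ)/16 ≤ 1 / (16 * t^2) := by
      rw [le_div_iff₀ (by nlinarith)]
      nlinarith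
    linarith
  have hb2 : ∀ z ∈ S2, (5/4 : ℝ) ≤ f z := by
    intro z hz
    obtain ⟨h1, h2⟩ := hS2mem z hz
    set t := ‖z‖ ^ 2 with ht
    have hfz : f z = 1 + 1 / (16 * t^2) := by rw [hfdef, ht]; ring_nf
    rw [hfz]
    have : (1:ℝ)/4 ≤ 1 / (16 * t^2) := by
      rw [le_div_iff₀ (by nlinarith)]
      nlinarith
    linarith
  have hdisj : Disjoint S1 S2 := by
    rw [Set.disjoint_left]
    intro z h1 h2
    exact h2.2 h1.1
  calc (1:ℝ) < 25/16 * (1/12 * Real.pi) + 5/4 * (1/6 * Real.pi) := by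
        nlinarith [Real.pi_gt_three]
    _ = 25/16 * (volume S1).toReal + 5/4 * (volume S2).toReal := by rw [v1, v2]
    _ ≤ (∫ z in S1, f z) + ∫ z in S2, f z :=
        add_le_add (by have := setIntegral_ge_of_const_le hS1m hS1fin hb1 hIntS1
                       simp only [smul_eq_mul, Measure.real] at this; linarith)
          (by have := setIntegral_ge_of_const_le hS2m hS2fin hb2 hIntS2
              simp only [smul_eq_mul, Measure.real] at this; linarith)
    _ = ∫ z in S1 ∪ S2, f z := (setIntegral_union hdisj hS2m hIntS1 hIntS2).symm
    _ ≤ ∫ z in A, f z := by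
        apply setIntegral_mono_set hIntA
          (Filter.Eventually.of_forall fun z => by rw [hfdef]; positivity)
        exact (Set.union_subset hS1A hS2A).eventuallyLE
end

section
/- The 2-dimensional Hausdorff measure, with respect to the Euclidean distance on ℂ² ≅ ℝ⁴, of the set {(z,w) ∈ ℂ² : zw = 1/4 and |z|² + |w|² ≤ 1} is strictly greater than 1. -/
open MeasureTheory

/-- The Borel σ-algebra on `ℂ² = EuclideanSpace ℂ (Fin 2)` (with its Euclidean distance). -/
noncomputable instance : MeasurableSpace (EuclideanSpace ℂ (Fin 2)) := borel _

instance : BorelSpace (EuclideanSpace ℂ (Fin 2)) := ⟨rfl⟩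

open Metric Set ENNReal

/-- The projection to the first coordinate is `1`-Lipschitz. -/
lemma lip_proj_aux : LipschitzWith 1 (fun p : EuclideanSpace ℂ (Fin 2) => p 0) := by
  apply LipschitzWith.of_dist_le_mul
  intro p q
  rw [NNReal.coe_one, one_mul, EuclideanSpace.dist_eq]
  have h : dist (p 0) (q 0) ^ 2 ≤ ∑ i : Fin 2, dist (p i) (q i) ^ 2 := by
    have := Finset.single_le_sum (f := fun i : Fin 2 => dist (p i) (q i) ^ 2)
      (fun i _ => by positivity) (Finset.mem_univ 0)
    simpa using this
  calc dist (p 0) (q 0) = √(dist (p 0) (q 0) ^ 2) := by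
        rw [Real.sqrt_sq dist_nonneg]
    _ ≤ _ := Real.sqrt_le_sqrt h

/-- The identification `ℂ ≃ (Fin 2 → ℝ)` (with the sup metric on the target) is `1`-Lipschitz. -/
lemma lip_pi_aux : LipschitzWith 1 (fun z : ℂ => (Complex.measurableEquivPi z : Fin 2 → ℝ)) := by
  apply LipschitzWith.of_dist_le_mul
  intro z w
  rw [NNReal.coe_one, one_mul, dist_pi_le_iff dist_nonneg]
  intro i
  fin_cases i <;>
    simp only [Complex.measurableEquivPi_apply, Matrix.cons_val_zero, Matrix.cons_val_one,
      Matrix.head_cons, Real.dist_eq, Complex.dist_eq]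
  · exact (by simpa using Complex.abs_re_le_norm (z - w))
  · exact (by simpa using Complex.abs_im_le_norm (z - w))

/-- The 2-dimensional Hausdorff measure, with respect to the Euclidean distance
on `ℂ² ≅ ℝ⁴`, of the set `{(z,w) ∈ ℂ² : zw = 1/4 and |z|² + |w|² ≤ 1}` is strictly
greater than `1`. -/
theorem hausdorff_measure_curve_gt_one :
    1 < μH[2] {p : EuclideanSpace ℂ (Fin 2) |
      p 0 * p 1 = 1 / 4 ∧ ‖p 0‖ ^ 2 + ‖p 1‖ ^ 2 ≤ 1} := by
  set S := {p : EuclideanSpace ℂ (Fin 2) |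
      p 0 * p 1 = 1 / 4 ∧ ‖p 0‖ ^ 2 + ‖p 1‖ ^ 2 ≤ 1} with hS
  set e := Complex.measurableEquivPi
  set A : Set ℂ := closedBall 0 (9/10) \ ball 0 (3/10) with hA
  -- The composed projection `p ↦ (Re (p 0), Im (p 0))` is 1-Lipschitz.
  have lipf : LipschitzWith 1 (fun p : EuclideanSpace ℂ (Fin 2) => (e (p 0) : Fin 2 → ℝ)) := by
    have h := lip_pi_aux.comp lip_proj_aux; rw [mul_one] at h; exact h
  -- The image of `S` under this projection contains (the image of) the annulus `A`:
  -- for `3/10 ≤ |z| ≤ 9/10`, the point `(z, 1/(4z))` lies in `S`.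
  have hsub : (e '' A : Set (Fin 2 → ℝ)) ⊆ (fun p : EuclideanSpace ℂ (Fin 2) => e (p 0)) '' S := by
    rintro x ⟨z, hz, rfl⟩
    obtain ⟨hz1, hz2⟩ := hz
    rw [mem_closedBall_zero_iff] at hz1
    rw [mem_ball_zero_iff] at hz2
    push_neg at hz2
    have hzabs : (3:ℝ)/10 ≤ ‖z‖ := hz2
    have htpos : (0:ℝ) < ‖z‖ := lt_of_lt_of_le (by norm_num) hzabs
    have hzne : z ≠ 0 := by
      simpa using htpos.ne'
    refine ⟨(WithLp.toLp 2 ![z, 1/(4*z)] : EuclideanSpace ℂ (Fin 2)), ⟨?_, ?_⟩, rfl⟩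
    · show z * (1/(4*z)) = 1/4
      field_simp
    · show ‖z‖ ^ 2 + ‖1/(4*z)‖ ^ 2 ≤ 1
      have h4 : ‖1/(4*z)‖ = 1 / (4 * ‖z‖) := by
        simp [norm_div, norm_mul]
      rw [h4]
      set t := ‖z‖ with ht
      have ht1 : (3:ℝ)/10 ≤ t := hzabs
      have ht2 : t ≤ 9/10 := hz1
      have ha : (9:ℝ)/100 ≤ t^2 := by nlinarith
      have hb : t^2 ≤ (81:ℝ)/100 := by nlinarith
      have hP : (0:ℝ) ≤ (t^2 - 9/100) * (81/100 - t^2) :=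
        mul_nonneg (by linarith) (by linarith)
      rw [div_pow, one_pow, mul_pow]
      have hle : (1:ℝ) / (4^2 * t^2) ≤ 1 - t^2 := by
        rw [div_le_iff₀ (by positivity)]
        nlinarith
      linarith
  -- The area of the annulus is `(81/100 - 9/100) π = (72/100) π`.
  have hAvol : volume A = ENNReal.ofReal (72/100) * (NNReal.pi : ℝ≥0∞) := by
    rw [hA, measure_diff (ball_subset_closedBall.trans (closedBall_subset_closedBall (by norm_num)))
      measurableSet_ball.nullMeasurableSet (measure_ball_lt_top).ne]
    rw [Complex.volume_closedBall, Complex.volume_ball]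
    rw [← ENNReal.sub_mul (by intro _ _; exact ENNReal.coe_ne_top)]
    congr 1
    rw [← ENNReal.ofReal_pow (by norm_num), ← ENNReal.ofReal_pow (by norm_num),
      ← ENNReal.ofReal_sub _ (by positivity)]
    norm_num
  -- The identification `ℂ ≃ (Fin 2 → ℝ)` is volume preserving.
  have hvolim : volume (e '' A) = volume A := by
    rw [MeasurableEquiv.image_eq_preimage_symm]
    exact (Complex.volume_preserving_equiv_pi.symm e).measure_preimage
      ((measurableSet_closedBall.diff measurableSet_ball).nullMeasurableSet)
  -- Hausdorff measure does not increase under 1-Lipschitz maps, and on `Fin 2 → ℝ`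
  -- the 2-dimensional Hausdorff measure is the Lebesgue measure.
  have key : volume (e '' A) ≤ μH[2] S := by
    have h1 : μH[(2:ℝ)] ((fun p : EuclideanSpace ℂ (Fin 2) => e (p 0)) '' S) ≤
        (1:NNReal) ^ (2:ℝ) * μH[2] S := lipf.hausdorffMeasure_image_le (by norm_num) S
    have h2 : volume (e '' A) ≤ μH[(2:ℝ)] ((fun p : EuclideanSpace ℂ (Fin 2) => e (p 0)) '' S) := by
      rw [← hausdorffMeasure_pi_real (ι := Fin 2)]
      have hcard : ((Fintype.card (Fin 2) : ℝ)) = (2:ℝ) := by simp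
      rw [hcard]
      exact measure_mono hsub
    simpa using h2.trans h1
  refine lt_of_lt_of_le ?_ key
  rw [hvolim, hAvol]
  have hpi : (NNReal.pi : ℝ≥0∞) = ENNReal.ofReal Real.pi := by
    rw [← NNReal.coe_real_pi, ENNReal.ofReal_coe_nnreal]
  rw [hpi, ← ENNReal.ofReal_mul (by norm_num)]
  rw [show (1:ℝ≥0∞) = ENNReal.ofReal 1 by simp]
  rw [ENNReal.ofReal_lt_ofReal_iff (by positivity)]
  nlinarith [Real.pi_gt_three]
end

section
/- Identify ℂ⁵ = {v = (a,b,α,β,γ)} with ℝ¹⁰ and let λ be the Lebesgue measure; write ‖v‖² = |a|²+|b|²+|α|²+|β|²+|γ|². For 0 < r < R, define φ_{r,R} = (1/(4(2π)⁵)) ∫_{ℂ⁵} (|a|²+|b|²) e^{−‖v‖²/2} 1_{{π|2γab − √2αb² − √2βa²|²/(|a|²+|b|²)³ ∈ [r,R]}} dλ(v). Then 0 < φ_{r,R} < 1. -/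
open MeasureTheory

/-- The constant `φ_{r,R}` of the paper: with `v = (a,b,α,β,γ) ∈ ℂ⁵` and `λ` the Lebesgue
measure on `ℂ⁵ ≅ ℝ¹⁰`,
`φ_{r,R} = (1/(4(2π)⁵)) ∫_{ℂ⁵} (|a|²+|b|²) e^{−‖v‖²/2}
  1_{{π|2γab − √2αb² − √2βa²|²/(|a|²+|b|²)³ ∈ [r,R]}} dλ(v)`. -/
noncomputable def phiRR (r R : ℝ) : ℝ :=
  (1 / (4 * (2 * Real.pi) ^ 5)) *
    ∫ v : Fin 5 → ℂ,
      (‖v 0‖ ^ 2 + ‖v 1‖ ^ 2) *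
        Real.exp (-(∑ i, ‖v i‖ ^ 2) / 2) *
        (if Real.pi * (‖2 * v 4 * v 0 * v 1
              - (Real.sqrt 2 : ℂ) * v 2 * (v 1) ^ 2
              - (Real.sqrt 2 : ℂ) * v 3 * (v 0) ^ 2‖) ^ 2
            / (‖v 0‖ ^ 2 + ‖v 1‖ ^ 2) ^ 3 ∈ Set.Icc r R
          then 1 else 0)

open Real Set

lemma ioi1 : ∫ y in Ioi (0:ℝ), y * Real.exp (-(y^2)/2) = 1 := by
  rw [setIntegral_congr_fun measurableSet_Ioi
    (g := fun y : ℝ => y ^ (1:ℝ) * Real.exp (-(1/2) * y ^ (2:ℝ)))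
    (by intro y hy
        show y * Real.exp (-(y^2)/2) = y ^ (1:ℝ) * Real.exp (-(1/2) * y ^ (2:ℝ))
        rw [Real.rpow_one, Real.rpow_two]; ring_nf)]
  rw [integral_rpow_mul_exp_neg_mul_rpow two_pos (by norm_num) (by norm_num)]
  rw [show (-((1:ℝ)+1)/2 : ℝ) = ((-1:ℤ):ℝ) by norm_num, Real.rpow_intCast]
  norm_num [Real.Gamma_one]

lemma ioi3 : ∫ y in Ioi (0:ℝ), y ^ 3 * Real.exp (-(y^2)/2) = 2 := by
  rw [setIntegral_congr_fun measurableSet_Ioi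
    (g := fun y : ℝ => y ^ (3:ℝ) * Real.exp (-(1/2) * y ^ (2:ℝ)))
    (by intro y hy
        show y ^ 3 * Real.exp (-(y^2)/2) = y ^ (3:ℝ) * Real.exp (-(1/2) * y ^ (2:ℝ))
        rw [show (3:ℝ) = ((3:ℕ):ℝ) by norm_num, Real.rpow_natCast, Real.rpow_two]; ring_nf)]
  rw [integral_rpow_mul_exp_neg_mul_rpow two_pos (by norm_num) (by norm_num)]
  rw [show (-((3:ℝ)+1)/2 : ℝ) = ((-2:ℤ):ℝ) by norm_num, Real.rpow_intCast]
  rw [show ((3:ℝ)+1)/2 = 2 by norm_num, Real.Gamma_two]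
  norm_num

lemma cB : ∫ z : ℂ, Real.exp (-(‖z‖ ^ 2) / 2) = 2 * π := by
  have h := integral_fun_norm_addHaar (volume : Measure ℂ)
    (fun y : ℝ => Real.exp (-(y ^ 2) / 2))
  rw [h, Complex.finrank_real_complex]
  rw [measureReal_def, Complex.volume_ball]
  simp only [smul_eq_mul, nsmul_eq_mul]
  rw [setIntegral_congr_fun measurableSet_Ioi
    (g := fun y : ℝ => y * Real.exp (-(y^2)/2))
    (by intro y hy; simp [pow_one])]
  rw [ioi1]
  simp [Real.pi_pos.le]

lemma cA : ∫ z : ℂ, ‖z‖ ^ 2 * Real.exp (-(‖z‖ ^ 2) / 2) = 4 * π := by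
  have h := integral_fun_norm_addHaar (volume : Measure ℂ)
    (fun y : ℝ => y ^ 2 * Real.exp (-(y ^ 2) / 2))
  rw [h, Complex.finrank_real_complex, measureReal_def, Complex.volume_ball]
  simp only [smul_eq_mul, nsmul_eq_mul]
  rw [setIntegral_congr_fun measurableSet_Ioi
    (g := fun y : ℝ => y ^ 3 * Real.exp (-(y^2)/2))
    (by intro y hy; show y ^ (2-1) * (y^2 * Real.exp (-(y^2)/2)) = _; ring)]
  rw [ioi3]
  simp [Real.pi_pos.le]; ring

lemma intB : Integrable (fun z : ℂ => Real.exp (-(‖z‖ ^ 2) / 2)) := by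
  rw [← (MeasurePreserving.symm _ Complex.volume_preserving_equiv_real_prod).integrable_comp_emb
      (MeasurableEquiv.measurableEmbedding _)]
  have he : ((fun z : ℂ => Real.exp (-(‖z‖ ^ 2) / 2)) ∘
      Complex.measurableEquivRealProd.symm) =
      fun p : ℝ × ℝ => Real.exp (-(1/2) * p.1 ^ 2) * Real.exp (-(1/2) * p.2 ^ 2) := by
    ext p
    simp only [Function.comp_apply, Complex.measurableEquivRealProd_symm_apply,
      Complex.sq_norm, Complex.normSq_mk, ← Real.exp_add]
    ring_nf
  rw [he]
  exact (integrable_exp_neg_mul_sq (by norm_num)).mul_prod (integrable_exp_neg_mul_sq (by norm_num))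

lemma intA : Integrable (fun z : ℂ => ‖z‖ ^ 2 * Real.exp (-(‖z‖ ^ 2) / 2)) := by
  rw [← (MeasurePreserving.symm _ Complex.volume_preserving_equiv_real_prod).integrable_comp_emb
      (MeasurableEquiv.measurableEmbedding _)]
  have he : ((fun z : ℂ => ‖z‖ ^ 2 * Real.exp (-(‖z‖ ^ 2) / 2)) ∘
      Complex.measurableEquivRealProd.symm) =
      fun p : ℝ × ℝ => (p.1 ^ 2 * Real.exp (-(1/2) * p.1 ^ 2)) * Real.exp (-(1/2) * p.2 ^ 2)
        + Real.exp (-(1/2) * p.1 ^ 2) * (p.2 ^ 2 * Real.exp (-(1/2) * p.2 ^ 2)) := by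
    ext p
    simp only [Function.comp_apply, Complex.measurableEquivRealProd_symm_apply,
      Complex.sq_norm, Complex.normSq_mk, ← Real.exp_add]
    ring_nf; rw [Real.exp_add]; ring
  rw [he]
  have h2 : Integrable (fun x : ℝ => x ^ 2 * Real.exp (-(1/2) * x ^ 2)) := by
    have h := integrable_rpow_mul_exp_neg_mul_sq (b := 1/2) (by norm_num) (s := 2) (by norm_num)
    have he2 : (fun x : ℝ => x ^ (2:ℝ) * Real.exp (-(1/2) * x ^ 2)) =
        fun x : ℝ => x ^ 2 * Real.exp (-(1/2) * x ^ 2) := by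
      ext x; rw [show (2:ℝ) = ((2:ℕ):ℝ) by norm_num, Real.rpow_natCast]
    rwa [he2] at h
  exact (h2.mul_prod (integrable_exp_neg_mul_sq (by norm_num))).add
    ((integrable_exp_neg_mul_sq (by norm_num)).mul_prod h2)

noncomputable def fA' (z : ℂ) : ℝ := ‖z‖ ^ 2 * Real.exp (-(‖z‖ ^ 2) / 2)
noncomputable def fB' (z : ℂ) : ℝ := Real.exp (-(‖z‖ ^ 2) / 2)
noncomputable def G0 : Fin 5 → ℂ → ℝ := ![fA', fB', fB', fB', fB']
noncomputable def G1 : Fin 5 → ℂ → ℝ := ![fB', fA', fB', fB', fB']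

lemma w_eq (v : Fin 5 → ℂ) :
    (‖v 0‖ ^ 2 + ‖v 1‖ ^ 2) *
      Real.exp (-(∑ i, ‖v i‖ ^ 2) / 2) =
    (∏ i, G0 i (v i)) + (∏ i, G1 i (v i)) := by
  simp only [Fin.sum_univ_five, Fin.prod_univ_five, G0, G1, fA', fB',
    Matrix.cons_val_zero, Matrix.cons_val_one, Matrix.head_cons,
    Matrix.cons_val_two, Matrix.tail_cons, Matrix.cons_val_three, Matrix.cons_val_four]
  rw [show -(‖v 0‖ ^ 2 + ‖v 1‖ ^ 2 + ‖v 2‖ ^ 2 +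
      ‖v 3‖ ^ 2 + ‖v 4‖ ^ 2) / 2
    = -(‖v 0‖ ^ 2)/2 + (-(‖v 1‖ ^ 2)/2) + (-(‖v 2‖ ^ 2)/2)
      + (-(‖v 3‖ ^ 2)/2) + (-(‖v 4‖ ^ 2)/2) by ring,
    Real.exp_add, Real.exp_add, Real.exp_add, Real.exp_add]
  ring

lemma intG0 : Integrable (fun v : Fin 5 → ℂ => ∏ i, G0 i (v i)) := by
  apply Integrable.fin_nat_prod
  intro i
  fin_cases i <;> simp only [G0, Matrix.cons_val_zero, Matrix.cons_val_one, Matrix.head_cons,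
    Matrix.cons_val_two, Matrix.tail_cons, Matrix.cons_val_three, Matrix.cons_val_four] <;>
    first | exact intA | exact intB

lemma intG1 : Integrable (fun v : Fin 5 → ℂ => ∏ i, G1 i (v i)) := by
  apply Integrable.fin_nat_prod
  intro i
  fin_cases i <;> simp only [G1, Matrix.cons_val_zero, Matrix.cons_val_one, Matrix.head_cons,
    Matrix.cons_val_two, Matrix.tail_cons, Matrix.cons_val_three, Matrix.cons_val_four] <;>
    first | exact intA | exact intB

lemma intW : Integrable (fun v : Fin 5 → ℂ =>
    (‖v 0‖ ^ 2 + ‖v 1‖ ^ 2) *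
      Real.exp (-(∑ i, ‖v i‖ ^ 2) / 2)) := by
  have : (fun v : Fin 5 → ℂ =>
      (‖v 0‖ ^ 2 + ‖v 1‖ ^ 2) *
        Real.exp (-(∑ i, ‖v i‖ ^ 2) / 2)) =
      fun v => (∏ i, G0 i (v i)) + (∏ i, G1 i (v i)) := funext w_eq
  rw [this]; exact intG0.add intG1

lemma intWval : ∫ v : Fin 5 → ℂ,
    (‖v 0‖ ^ 2 + ‖v 1‖ ^ 2) *
      Real.exp (-(∑ i, ‖v i‖ ^ 2) / 2) = 4 * (2 * π) ^ 5 := by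
  simp_rw [w_eq]
  rw [integral_add intG0 intG1, integral_fin_nat_prod_volume_eq_prod, integral_fin_nat_prod_volume_eq_prod]
  simp only [Fin.prod_univ_five, G0, G1, fA', fB', Matrix.cons_val_zero, Matrix.cons_val_one,
    Matrix.head_cons, Matrix.cons_val_two, Matrix.tail_cons, Matrix.cons_val_three,
    Matrix.cons_val_four, cA, cB]
  ring

noncomputable def gfun (v : Fin 5 → ℂ) : ℝ :=
  Real.pi * (‖2 * v 4 * v 0 * v 1
      - (Real.sqrt 2 : ℂ) * v 2 * (v 1) ^ 2
      - (Real.sqrt 2 : ℂ) * v 3 * (v 0) ^ 2‖) ^ 2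
    / (‖v 0‖ ^ 2 + ‖v 1‖ ^ 2) ^ 3

lemma measurable_gfun : Measurable gfun := by
  unfold gfun; fun_prop

lemma continuous_D : Continuous (fun v : Fin 5 → ℂ => ‖v 0‖ ^ 2 + ‖v 1‖ ^ 2) := by
  fun_prop

lemma continuousOn_gfun : ContinuousOn gfun {v : Fin 5 → ℂ | 0 < ‖v 0‖ ^ 2 + ‖v 1‖ ^ 2} := by
  apply ContinuousOn.div
  · apply Continuous.continuousOn; fun_prop
  · exact (continuous_D.pow 3).continuousOn
  · intro v hv
    exact pow_ne_zero 3 (ne_of_gt hv)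

lemma isOpen_U : IsOpen {v : Fin 5 → ℂ | 0 < ‖v 0‖ ^ 2 + ‖v 1‖ ^ 2} :=
  isOpen_lt continuous_const continuous_D

section pts
variable (r R : ℝ)

noncomputable def v0pt : Fin 5 → ℂ := ![1, 1, 0, 0, ((Real.sqrt ((r+R)/Real.pi) : ℝ) : ℂ)]
noncomputable def v1pt : Fin 5 → ℂ := ![1, 0, 0, 0, 0]

lemma gfun_v0 (hr : 0 < r) (hrR : r < R) : gfun (v0pt r R) = (r + R) / 2 := by
  have ht : (0:ℝ) ≤ (r+R)/Real.pi := div_nonneg (by linarith) Real.pi_pos.le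
  unfold gfun v0pt
  simp only [Matrix.cons_val_zero, Matrix.cons_val_one, Matrix.head_cons, Matrix.cons_val_two,
    Matrix.tail_cons, Matrix.cons_val_three, Matrix.cons_val_four, mul_zero, zero_mul, mul_one,
    sub_zero, one_pow, map_one, norm_one]
  rw [show (2 : ℂ) * (Real.sqrt ((r+R)/Real.pi) : ℂ) =
    ((2 * Real.sqrt ((r+R)/Real.pi) : ℝ) : ℂ) by push_cast; ring]
  rw [Complex.norm_real, Real.norm_of_nonneg (by positivity)]
  rw [mul_pow, Real.sq_sqrt ht]
  field_simp
  ring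

lemma D_v0 : ‖v0pt r R 0‖ ^ 2 + ‖v0pt r R 1‖ ^ 2 = 2 := by
  unfold v0pt
  simp [Matrix.cons_val_zero, Matrix.cons_val_one, Matrix.head_cons]
  norm_num

lemma gfun_v1 : gfun v1pt = 0 := by
  unfold gfun v1pt
  simp only [Matrix.cons_val_zero, Matrix.cons_val_one, Matrix.head_cons, Matrix.cons_val_two,
    Matrix.tail_cons, Matrix.cons_val_three, Matrix.cons_val_four, mul_zero, zero_mul, mul_one,
    sub_zero, one_pow, map_one, zero_pow, map_zero]
  simp

lemma D_v1 : ‖v1pt 0‖ ^ 2 + ‖v1pt 1‖ ^ 2 = 1 := by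
  unfold v1pt
  simp [Matrix.cons_val_zero, Matrix.cons_val_one, Matrix.head_cons]

end pts

/-- For `0 < r < R`, one has `0 < φ_{r,R} < 1`. -/
theorem phiRR_mem_Ioo (r R : ℝ) (hr : 0 < r) (hrR : r < R) :
    phiRR r R ∈ Set.Ioo (0 : ℝ) 1 := by
  have hWnn : ∀ v : Fin 5 → ℂ,
      0 ≤ (‖v 0‖ ^ 2 + ‖v 1‖ ^ 2) *
        Real.exp (-(∑ i, ‖v i‖ ^ 2) / 2) :=
    fun v => mul_nonneg (by positivity) (Real.exp_nonneg _)
  set W : (Fin 5 → ℂ) → ℝ := fun v =>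
    (‖v 0‖ ^ 2 + ‖v 1‖ ^ 2) *
      Real.exp (-(∑ i, ‖v i‖ ^ 2) / 2) with hWdef
  set χ : (Fin 5 → ℂ) → ℝ := fun v => if gfun v ∈ Set.Icc r R then 1 else 0 with hχdef
  have hphi : phiRR r R = (1 / (4 * (2 * Real.pi) ^ 5)) * ∫ v, W v * χ v := rfl
  have hχnn : ∀ v, 0 ≤ χ v := by
    intro v; rw [hχdef]; dsimp only; split <;> norm_num
  have hχle : ∀ v, χ v ≤ 1 := by
    intro v; rw [hχdef]; dsimp only; split <;> norm_num
  have hWmeas : Measurable W := by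
    rw [hWdef]
    simp only [Fin.sum_univ_five]
    fun_prop
  have hχmeas : Measurable χ := by
    rw [hχdef]
    exact Measurable.ite (measurable_gfun measurableSet_Icc) measurable_const measurable_const
  have hintW : Integrable W := intW
  have hint1 : Integrable (fun v => W v * χ v) := by
    apply Integrable.mono' hintW ((hWmeas.mul hχmeas).aestronglyMeasurable)
    filter_upwards with v
    simp only [Pi.mul_apply, Pi.sub_apply]
    rw [Real.norm_eq_abs, abs_of_nonneg (mul_nonneg (hWnn v) (hχnn v))]
    calc W v * χ v ≤ W v * 1 := mul_le_mul_of_nonneg_left (hχle v) (hWnn v)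
    _ = W v := mul_one _
  have hint2 : Integrable (fun v => W v * (1 - χ v)) := by
    apply Integrable.mono' hintW ((hWmeas.mul (measurable_const.sub hχmeas)).aestronglyMeasurable)
    filter_upwards with v
    simp only [Pi.mul_apply, Pi.sub_apply]
    rw [Real.norm_eq_abs, abs_of_nonneg (mul_nonneg (hWnn v) (by linarith [hχle v]))]
    calc W v * (1 - χ v) ≤ W v * 1 := mul_le_mul_of_nonneg_left (by linarith [hχnn v]) (hWnn v)
    _ = W v := mul_one _
  -- positivity of the main integral
  have hpos1 : 0 < ∫ v, W v * χ v := by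
    set S := {v : Fin 5 → ℂ | 0 < ‖v 0‖ ^ 2 + ‖v 1‖ ^ 2} ∩
      gfun ⁻¹' Set.Ioo r R with hS
    have hSopen : IsOpen S := continuousOn_gfun.isOpen_inter_preimage isOpen_U isOpen_Ioo
    have hv0S : v0pt r R ∈ S := by
      constructor
      · simp only [Set.mem_setOf_eq]
        rw [D_v0]; norm_num
      · show gfun (v0pt r R) ∈ Set.Ioo r R
        rw [gfun_v0 r R hr hrR]
        constructor <;> [linarith; linarith]
    have hSsub : S ⊆ Function.support (fun v => W v * χ v) := by
      rintro v ⟨hv1, hv2⟩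
      have hWpos : 0 < W v := mul_pos hv1 (Real.exp_pos _)
      have hχ1 : χ v = 1 := by
        rw [hχdef]; dsimp only
        rw [if_pos (Set.Ioo_subset_Icc_self hv2)]
      simp only [Function.mem_support, hχ1, mul_one]
      exact ne_of_gt hWpos
    refine (integral_pos_iff_support_of_nonneg
      (fun v => mul_nonneg (hWnn v) (hχnn v)) hint1).2 ?_
    exact lt_of_lt_of_le (hSopen.measure_pos volume ⟨_, hv0S⟩) (measure_mono hSsub)
  -- positivity of the complementary integral
  have hpos2 : 0 < ∫ v, W v * (1 - χ v) := by
    set S' := {v : Fin 5 → ℂ | 0 < ‖v 0‖ ^ 2 + ‖v 1‖ ^ 2} ∩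
      gfun ⁻¹' Set.Iio r with hS'
    have hSopen : IsOpen S' := continuousOn_gfun.isOpen_inter_preimage isOpen_U isOpen_Iio
    have hv1S : v1pt ∈ S' := by
      constructor
      · simp only [Set.mem_setOf_eq]
        rw [D_v1]; norm_num
      · show gfun v1pt ∈ Set.Iio r
        rw [gfun_v1]; exact hr
    have hSsub : S' ⊆ Function.support (fun v => W v * (1 - χ v)) := by
      rintro v ⟨hv1, hv2⟩
      have hWpos : 0 < W v := mul_pos hv1 (Real.exp_pos _)
      have hχ0 : χ v = 0 := by
        rw [hχdef]; dsimp only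
        rw [if_neg]
        intro hmem
        exact absurd hmem.1 (not_le.2 hv2)
      simp only [Function.mem_support, hχ0, sub_zero, mul_one]
      exact ne_of_gt hWpos
    refine (integral_pos_iff_support_of_nonneg
      (fun v => mul_nonneg (hWnn v) (by linarith [hχle v])) hint2).2 ?_
    exact lt_of_lt_of_le (hSopen.measure_pos volume ⟨_, hv1S⟩) (measure_mono hSsub)
  have hsplit : (4 : ℝ) * (2 * Real.pi) ^ 5 = (∫ v, W v * χ v) + ∫ v, W v * (1 - χ v) := by
    rw [← integral_add hint1 hint2]
    rw [← intWval]
    congr 1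
    funext v
    ring
  have hlt : (∫ v, W v * χ v) < 4 * (2 * Real.pi) ^ 5 := by linarith
  have hc : (0:ℝ) < 4 * (2 * Real.pi) ^ 5 := by positivity
  rw [hphi]
  constructor
  · positivity
  · rw [show (1 / (4 * (2 * Real.pi) ^ 5)) * (∫ v, W v * χ v)
      = (∫ v, W v * χ v) / (4 * (2 * Real.pi) ^ 5) by ring, div_lt_one hc]
    exact hlt
end
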